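/- Let T_m be a Hermite pseudo-multiplier satisfying Σ_{ν ∈ ℕ₀ⁿ} (∫ |m(x,ν)|² φ_ν(x)² dx)^{1/2} < ∞. Then T_m is trace class and its trace equals Σ_{ν ∈ ℕ₀ⁿ} ∫_{ℝⁿ} m(x,ν) φ_ν(x)² dx. -/

import Mathlib

open MeasureTheory Filter
open scoped BigOperators ENNReal

noncomputable section

/-- Physicists' Hermite polynomials: `H₀ = 1`, `H_{k+1} = 2 X H_k - H_k'`. -/
def physHermite : ℕ → Polynomial ℝ
  | 0 => 1
  | k + 1 => 2 * Polynomial.X * physHermite k - Polynomial.derivative (physHermite k)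

/-- One-dimensional normalized Hermite functions. -/
def hermiteFun (k : ℕ) (x : ℝ) : ℝ :=
  ((2 : ℝ) ^ k * (Nat.factorial k : ℝ) * Real.sqrt Real.pi) ^ (-(1 : ℝ) / 2) *
    (physHermite k).eval x * Real.exp (-x ^ 2 / 2)

/-- Product of one-dimensional Hermite functions for a multi-index, plain pi-type version. -/
def hermiteProd (n : ℕ) (ν : Fin n → ℕ) (x : Fin n → ℝ) : ℝ :=
  ∏ j, hermiteFun (ν j) (x j)

/-- `n`-dimensional Hermite function `φ_ν` on `ℝⁿ`. -/
def hermiteFunN (n : ℕ) (ν : Fin n → ℕ) (x : EuclideanSpace ℝ (Fin n)) : ℝ :=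
  ∏ j, hermiteFun (ν j) (x j)

/-- `L²(ℝⁿ)` with complex scalars. -/
abbrev L2Rn (n : ℕ) :=
  MeasureTheory.Lp ℂ 2 (volume : Measure (EuclideanSpace ℝ (Fin n)))

/-- `k`-th singular value (approximation number) of an operator on a Hilbert space:
the distance of `T` to operators of rank at most `k`. -/
def singularValue {H : Type*} [NormedAddCommGroup H] [InnerProductSpace ℂ H]
    (T : H →L[ℂ] H) (k : ℕ) : ℝ :=
  sInf {c : ℝ | ∃ F : H →L[ℂ] H,
    (∃ v : Fin k → H, LinearMap.range (F : H →ₗ[ℂ] H) ≤ Submodule.span ℂ (Set.range v)) ∧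
      c = ‖T - F‖}

/-- Schatten–von Neumann class of order `r`: the singular values are `r`-summable. -/
def MemSchatten {H : Type*} [NormedAddCommGroup H] [InnerProductSpace ℂ H]
    (r : ℝ) (T : H →L[ℂ] H) : Prop :=
  Summable fun k => singularValue T k ^ r

/-- Hilbert–Schmidt operators: `∑ ‖T e_ν‖² < ∞` for every orthonormal basis. -/
def IsHilbertSchmidt {H : Type*} [NormedAddCommGroup H] [InnerProductSpace ℂ H]
    (T : H →L[ℂ] H) : Prop :=
  ∀ (ι : Type) (b : HilbertBasis ι ℂ H), Summable fun i => ‖T (b i)‖ ^ 2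

end


/-! With `(e_ν)` the Hermite basis, the hypothesis says exactly that `∑_ν ‖T e_ν‖ < ∞`.
Choose unit-ball vectors `f_k` greedily, each orthogonal to the previous ones and with `T f_k`
almost as far as possible from `span {T f_i | i < k}`, and let `(h_k)` be the Gram–Schmidt
orthonormalisation of `(T f_k)`. Since `T` differs from its compression `Uᗮ → Vᗮ`
(`U = span {f_i}`, `V = span {T f_i}`) by an operator of rank `≤ k`, this gives
`s_k(T) ≤ |⟪h_k, T f_k⟫| + ε`. Expanding `f_k` in the basis, Cauchy–Schwarz and Bessel's inequality
for `(f_k)` and `(h_k)` give `∑_k |⟪h_k, T f_k⟫| ≤ ∑_ν ‖T e_ν‖`, so the singular values are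
summable. The trace formula is the termwise identity `⟪φ_ν, T φ_ν⟫ = ∫ m(x,ν) φ_ν(x)² dx`. -/

open Submodule Set InnerProductSpace

section Bessel

variable {𝕜 E ι : Type*} [RCLike 𝕜] [NormedAddCommGroup E] [InnerProductSpace 𝕜 E]

local notation "⟪" x ", " y "⟫" => inner 𝕜 x y

theorem sum_norm_inner_sq_le_of_pairwise_inner_eq_zero {v : ι → E}
    (hv : Pairwise fun i j => ⟪v i, v j⟫ = 0) (hv₁ : ∀ i, ‖v i‖ ≤ 1) (s : Finset ι) (x : E) :
    ∑ i ∈ s, ‖⟪v i, x⟫‖ ^ 2 ≤ ‖x‖ ^ 2 := by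
  classical
  set w : {i // v i ≠ 0} → E := fun i => (‖v i‖⁻¹ : 𝕜) • v i
  have hw : Orthonormal 𝕜 w := by
    refine ⟨fun i => norm_smul_inv_norm (x := v i) i.2, fun i j hij => ?_⟩
    simp [w, inner_smul_left, inner_smul_right, hv (Subtype.coe_ne_coe.mpr hij)]
  have hle : ∀ i : {i // v i ≠ 0}, ‖⟪v i, x⟫‖ ≤ ‖⟪w i, x⟫‖ := fun i => by
    have hpos : 0 < ‖v i‖ := norm_pos_iff.mpr i.2
    rw [inner_smul_left, norm_mul, RCLike.conj_inv, RCLike.conj_ofReal, norm_inv,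
      RCLike.norm_ofReal, abs_norm]
    exact le_mul_of_one_le_left (norm_nonneg _) ((one_le_inv₀ hpos).mpr (hv₁ i))
  calc ∑ i ∈ s, ‖⟪v i, x⟫‖ ^ 2 = ∑ i ∈ s.subtype (v · ≠ 0), ‖⟪v i, x⟫‖ ^ 2 := by
        rw [Finset.sum_subtype_eq_sum_filter (f := fun i => ‖⟪v i, x⟫‖ ^ 2),
          Finset.sum_filter_of_ne]
        intro i _ hi h0
        simp [h0] at hi
    _ ≤ ∑ i ∈ s.subtype (v · ≠ 0), ‖⟪w i, x⟫‖ ^ 2 :=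
        Finset.sum_le_sum fun i _ => pow_le_pow_left₀ (norm_nonneg _) (hle i) 2
    _ ≤ ‖x‖ ^ 2 := hw.sum_inner_products_le x

end Bessel

section GramSchmidt

variable {𝕜 E ι : Type*} [RCLike 𝕜] [NormedAddCommGroup E] [InnerProductSpace 𝕜 E]
  [LinearOrder ι] [LocallyFiniteOrderBot ι] [WellFoundedLT ι]

local notation "⟪" x ", " y "⟫" => inner 𝕜 x y

theorem sub_gramSchmidt_mem_span (v : ι → E) (k : ι) :
    v k - gramSchmidt 𝕜 v k ∈ span 𝕜 (v '' Iio k) := by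
  rw [sub_eq_iff_eq_add'.mpr (gramSchmidt_def'' 𝕜 v k), ← span_gramSchmidt_Iio]
  exact sum_mem fun i hi => smul_mem _ _ (subset_span (mem_image_of_mem _ (by simpa using hi)))

theorem norm_inner_gramSchmidtNormed_self (v : ι → E) (k : ι) :
    ‖⟪gramSchmidtNormed 𝕜 v k, v k⟫‖ = ‖gramSchmidt 𝕜 v k‖ := by
  have horth : ⟪gramSchmidt 𝕜 v k, v k - gramSchmidt 𝕜 v k⟫ = 0 := by
    refine (isOrtho_span.mpr ?_).inner_eq (mem_span_singleton_self _)
      (span_gramSchmidt_Iio 𝕜 v k ▸ sub_gramSchmidt_mem_span v k)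
    rintro _ rfl _ ⟨i, hi, rfl⟩
    exact gramSchmidt_orthogonal 𝕜 v (ne_of_gt hi)
  have hself : ⟪gramSchmidt 𝕜 v k, v k⟫ = (‖gramSchmidt 𝕜 v k‖ : 𝕜) ^ 2 := by
    rw [← sub_add_cancel (v k) (gramSchmidt 𝕜 v k), inner_add_right, horth, zero_add,
      inner_self_eq_norm_sq_to_K]
  rw [gramSchmidtNormed, inner_smul_left, hself, RCLike.conj_inv, RCLike.conj_ofReal,
    ← RCLike.ofReal_inv, ← RCLike.ofReal_pow, ← RCLike.ofReal_mul, RCLike.norm_ofReal]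
  rcases eq_or_ne ‖gramSchmidt 𝕜 v k‖ 0 with h | h
  · simp [h]
  · rw [sq, inv_mul_cancel_left₀ h, abs_norm]

theorem gramSchmidtNormed_pairwise_orthogonal (v : ι → E) :
    Pairwise fun i j => ⟪gramSchmidtNormed 𝕜 v i, gramSchmidtNormed 𝕜 v j⟫ = 0 := fun i j hij => by
  simp [gramSchmidtNormed, inner_smul_left, inner_smul_right, gramSchmidt_orthogonal 𝕜 v hij]

theorem norm_gramSchmidtNormed_le_one (v : ι → E) (k : ι) : ‖gramSchmidtNormed 𝕜 v k‖ ≤ 1 := by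
  by_cases h : gramSchmidtNormed 𝕜 v k = 0
  · simp [h]
  · exact (gramSchmidtNormed_unit_length' h).le

end GramSchmidt

instance FiniteDimensional.span_range_of_finite {K V ι : Type*} [DivisionRing K] [AddCommGroup V]
    [Module K V] [Finite ι] (v : ι → V) : FiniteDimensional K (span K (range v)) :=
  .span_of_finite K (finite_range v)

section SingularValue

variable {H : Type*} [NormedAddCommGroup H] [InnerProductSpace ℂ H]

theorem singularValue_nonneg (T : H →L[ℂ] H) (k : ℕ) : 0 ≤ singularValue T k :=
  Real.sInf_nonneg fun _ ⟨_, _, hc⟩ => hc ▸ norm_nonneg _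

theorem singularValue_le_norm_sub (T F : H →L[ℂ] H) {k : ℕ} (v : Fin k → H)
    (hF : LinearMap.range (F : H →ₗ[ℂ] H) ≤ span ℂ (range v)) :
    singularValue T k ≤ ‖T - F‖ :=
  csInf_le ⟨0, fun _ ⟨_, _, hc⟩ => hc ▸ norm_nonneg _⟩ ⟨F, ⟨v, hF⟩, rfl⟩

/-- `T` minus this compression maps into `span (range (T ∘ v))`, which is spanned by `N` vectors. -/
theorem singularValue_le_norm_compression (T : H →L[ℂ] H) {N : ℕ} (v : Fin N → H) :
    singularValue T N ≤ ‖(span ℂ (range (T ∘ v)))ᗮ.starProjection ∘L T ∘L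
      (span ℂ (range v))ᗮ.starProjection‖ := by
  set U := span ℂ (range v)
  set V := span ℂ (range (T ∘ v))
  have hTU : ∀ x ∈ U, T x ∈ V := fun x hx => by
    simpa only [V, range_comp, ContinuousLinearMap.coe_coe] using
      apply_mem_span_image_of_mem_span (T : H →ₗ[ℂ] H) hx
  have key := singularValue_le_norm_sub T (T - Vᗮ.starProjection ∘L T ∘L Uᗮ.starProjection)
    (T ∘ v) ?_
  · rwa [sub_sub_cancel] at key
  rintro _ ⟨x, rfl⟩
  have hx : (T - Vᗮ.starProjection ∘L T ∘L Uᗮ.starProjection) x =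
      T (U.starProjection x) + V.starProjection (T (x - U.starProjection x)) := by
    simp only [sub_apply, ContinuousLinearMap.comp_apply,
      starProjection_orthogonal_val, map_sub]
    abel
  exact hx ▸ add_mem (hTU _ (U.starProjection_apply_mem x)) (V.starProjection_apply_mem _)

theorem exists_mem_orthogonal_singularValue_sub_le (T : H →L[ℂ] H) {ε : ℝ} (hε : 0 < ε) {N : ℕ}
    (v : Fin N → H) :
    ∃ u ∈ (span ℂ (range v))ᗮ, ‖u‖ ≤ 1 ∧
      ∀ w ∈ span ℂ (range (T ∘ v)), singularValue T N - ε ≤ ‖T u - w‖ := by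
  set U := span ℂ (range v)
  set V := span ℂ (range (T ∘ v))
  set G := Vᗮ.starProjection ∘L T ∘L Uᗮ.starProjection
  obtain ⟨x, hx, hGx⟩ := G.exists_lt_apply_of_lt_opNorm (sub_lt_self ‖G‖ hε)
  refine ⟨Uᗮ.starProjection x, Uᗮ.starProjection_apply_mem x,
    (Uᗮ.norm_starProjection_apply_le x).trans hx.le, fun w hw => ?_⟩
  calc singularValue T N - ε ≤ ‖G‖ - ε := by
        linarith [singularValue_le_norm_compression T v]
    _ ≤ ‖G x‖ := hGx.le
    _ = ‖Vᗮ.starProjection (T (Uᗮ.starProjection x) - w)‖ := by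
        rw [map_sub, starProjection_orthogonal_apply_eq_zero hw, sub_zero]; rfl
    _ ≤ ‖T (Uᗮ.starProjection x) - w‖ := Vᗮ.norm_starProjection_apply_le _

end SingularValue

section Greedy

variable {H : Type*} [NormedAddCommGroup H] [InnerProductSpace ℂ H]

local notation "⟪" x ", " y "⟫" => inner ℂ x y

theorem range_fin_comp_eq_image_Iio {α : Type*} (f : ℕ → α) (N : ℕ) :
    range (fun i : Fin N => f i) = f '' Iio N := by
  rw [← Fin.range_val, ← range_comp]
  rfl

noncomputable def greedySingularSeq (T : H →L[ℂ] H) {ε : ℝ} (hε : 0 < ε) : ℕ → H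
  | N => Classical.choose
      (exists_mem_orthogonal_singularValue_sub_le T hε fun i : Fin N => greedySingularSeq T hε i)

theorem greedySingularSeq_spec (T : H →L[ℂ] H) {ε : ℝ} (hε : 0 < ε) (N : ℕ) :
    greedySingularSeq T hε N ∈ (span ℂ (greedySingularSeq T hε '' Iio N))ᗮ ∧
      ‖greedySingularSeq T hε N‖ ≤ 1 ∧
      ∀ w ∈ span ℂ ((T ∘ greedySingularSeq T hε) '' Iio N),
        singularValue T N - ε ≤ ‖T (greedySingularSeq T hε N) - w‖ := by
  rw [← range_fin_comp_eq_image_Iio, ← range_fin_comp_eq_image_Iio, greedySingularSeq]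
  exact Classical.choose_spec
    (exists_mem_orthogonal_singularValue_sub_le T hε fun i : Fin N => greedySingularSeq T hε i)

theorem greedySingularSeq_pairwise_orthogonal (T : H →L[ℂ] H) {ε : ℝ} (hε : 0 < ε) :
    Pairwise fun i j => ⟪greedySingularSeq T hε i, greedySingularSeq T hε j⟫ = 0 := by
  have h : ∀ i j, i < j → ⟪greedySingularSeq T hε i, greedySingularSeq T hε j⟫ = 0 :=
    fun i j hij => inner_right_of_mem_orthogonal (subset_span (mem_image_of_mem _ hij))
      (greedySingularSeq_spec T hε j).1
  intro i j hij
  rcases hij.lt_or_gt with hij | hij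
  · exact h i j hij
  · exact inner_eq_zero_symm.mp (h j i hij)

theorem singularValue_sub_le_norm_inner_gramSchmidtNormed (T : H →L[ℂ] H) {ε : ℝ} (hε : 0 < ε)
    (k : ℕ) :
    singularValue T k - ε ≤ ‖⟪gramSchmidtNormed ℂ (T ∘ greedySingularSeq T hε) k,
      T (greedySingularSeq T hε k)⟫‖ := by
  set v := T ∘ greedySingularSeq T hε
  calc singularValue T k - ε ≤ ‖v k - (v k - gramSchmidt ℂ v k)‖ :=
        (greedySingularSeq_spec T hε k).2.2 _ (sub_gramSchmidt_mem_span v k)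
    _ = ‖⟪gramSchmidtNormed ℂ v k, v k⟫‖ := by
        rw [sub_sub_cancel, norm_inner_gramSchmidtNormed_self]

end Greedy

section Nuclear

variable {𝕜 E ι κ : Type*} [RCLike 𝕜] [NormedAddCommGroup E] [InnerProductSpace 𝕜 E]

local notation "⟪" x ", " y "⟫" => inner 𝕜 x y

theorem sum_norm_inner_apply_le_tsum_norm_apply (b : HilbertBasis ι 𝕜 E) (T : E →L[𝕜] E)
    (hT : Summable fun i => ‖T (b i)‖) (f h : κ → E) (s : Finset κ)
    (hf : ∀ x, ∑ k ∈ s, ‖⟪f k, x⟫‖ ^ 2 ≤ ‖x‖ ^ 2) (hh : ∀ x, ∑ k ∈ s, ‖⟪h k, x⟫‖ ^ 2 ≤ ‖x‖ ^ 2) :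
    ∑ k ∈ s, ‖⟪h k, T (f k)⟫‖ ≤ ∑' i, ‖T (b i)‖ := by
  set a : κ → ι → ℝ := fun k i => ‖⟪f k, b i⟫‖ * ‖⟪h k, T (b i)⟫‖
  have ha : ∀ k, Summable (a k) := fun k =>
    (hT.mul_left (‖f k‖ * ‖h k‖)).of_nonneg_of_le (fun i => by positivity) fun i => by
      calc a k i ≤ ‖f k‖ * (‖h k‖ * ‖T (b i)‖) := by
            refine mul_le_mul ?_ (norm_inner_le_norm _ _) (norm_nonneg _) (norm_nonneg _)
            simpa [b.orthonormal.1 i] using norm_inner_le_norm (𝕜 := 𝕜) (f k) (b i)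
        _ = _ := by ring
  have hexpand : ∀ k, ‖⟪h k, T (f k)⟫‖ ≤ ∑' i, a k i := fun k => by
    have hsum : HasSum (fun i => ⟪b i, f k⟫ * ⟪h k, T (b i)⟫) ⟪h k, T (f k)⟫ := by
      simpa [b.repr_apply_apply, inner_smul_right, mul_comm] using
        (b.hasSum_repr (f k)).mapL ((innerSL 𝕜 (h k)).comp T)
    exact hsum.norm_le_of_bounded (ha k).hasSum fun i => by simp [a, norm_inner_symm]
  have hcs : ∀ i, ∑ k ∈ s, a k i ≤ ‖T (b i)‖ := fun i => by
    calc ∑ k ∈ s, a k i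
        ≤ √(∑ k ∈ s, ‖⟪f k, b i⟫‖ ^ 2) * √(∑ k ∈ s, ‖⟪h k, T (b i)⟫‖ ^ 2) :=
          Real.sum_mul_le_sqrt_mul_sqrt _ _ _
      _ ≤ √(‖b i‖ ^ 2) * √(‖T (b i)‖ ^ 2) := by gcongr; exacts [hf _, hh _]
      _ = ‖T (b i)‖ := by simp [b.orthonormal.1 i]
  calc ∑ k ∈ s, ‖⟪h k, T (f k)⟫‖ ≤ ∑ k ∈ s, ∑' i, a k i := Finset.sum_le_sum fun k _ => hexpand k
    _ = ∑' i, ∑ k ∈ s, a k i := (Summable.tsum_finsetSum fun k _ => ha k).symm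
    _ ≤ ∑' i, ‖T (b i)‖ := Summable.tsum_le_tsum hcs (summable_sum fun k _ => ha k) hT

end Nuclear

section TraceClass

variable {H ι : Type*} [NormedAddCommGroup H] [InnerProductSpace ℂ H]

local notation "⟪" x ", " y "⟫" => inner ℂ x y

theorem sum_range_singularValue_le_tsum_norm_apply (b : HilbertBasis ι ℂ H) {T : H →L[ℂ] H}
    (hT : Summable fun i => ‖T (b i)‖) (N : ℕ) :
    ∑ k ∈ Finset.range N, singularValue T k ≤ ∑' i, ‖T (b i)‖ := by
  refine le_of_forall_pos_le_add fun δ hδ => ?_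
  have hε : 0 < δ / (N + 1) := by positivity
  set f := greedySingularSeq T hε
  set h := gramSchmidtNormed ℂ (T ∘ f)
  have hf := sum_norm_inner_sq_le_of_pairwise_inner_eq_zero (𝕜 := ℂ)
    (greedySingularSeq_pairwise_orthogonal T hε) (fun k => (greedySingularSeq_spec T hε k).2.1)
    (Finset.range N)
  have hh := sum_norm_inner_sq_le_of_pairwise_inner_eq_zero
    (gramSchmidtNormed_pairwise_orthogonal (𝕜 := ℂ) (T ∘ f)) (norm_gramSchmidtNormed_le_one _)
    (Finset.range N)
  calc ∑ k ∈ Finset.range N, singularValue T k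
      ≤ ∑ k ∈ Finset.range N, (‖⟪h k, T (f k)⟫‖ + δ / (N + 1)) := Finset.sum_le_sum fun k _ =>
        sub_le_iff_le_add.mp (singularValue_sub_le_norm_inner_gramSchmidtNormed T hε k)
    _ = ∑ k ∈ Finset.range N, ‖⟪h k, T (f k)⟫‖ + N * (δ / (N + 1)) := by
        rw [Finset.sum_add_distrib, Finset.sum_const, Finset.card_range, nsmul_eq_mul]
    _ ≤ ∑' i, ‖T (b i)‖ + δ := by
        gcongr
        · exact sum_norm_inner_apply_le_tsum_norm_apply b T hT f h _ hf hh
        · rw [mul_div_left_comm]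
          exact mul_le_of_le_one_right hδ.le ((div_le_one (by positivity)).mpr (by linarith))

theorem summable_singularValue_of_summable_norm_apply (b : HilbertBasis ι ℂ H) {T : H →L[ℂ] H}
    (hT : Summable fun i => ‖T (b i)‖) : Summable (singularValue T) :=
  summable_of_sum_range_le (singularValue_nonneg T)
    (sum_range_singularValue_le_tsum_norm_apply b hT)

end TraceClass

theorem MeasureTheory.L2.norm_sq_eq_integral_norm_sq {α E : Type*} [MeasurableSpace α]
    {μ : Measure α} [NormedAddCommGroup E] [InnerProductSpace ℝ E] (f : α →₂[μ] E) :
    ‖f‖ ^ 2 = ∫ x, ‖f x‖ ^ 2 ∂μ := by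
  simp only [← real_inner_self_eq_norm_sq, L2.inner_def]

/-- If `∑_ν (∫ |m(x,ν)|² φ_ν(x)² dx)^{1/2} < ∞` then the Hermite
pseudo-multiplier `T_m` is trace class and its trace equals `∑_ν ∫ m(x,ν) φ_ν(x)² dx`. -/
theorem pseudoMultiplier_traceClass_and_trace
    (n : ℕ) (m : EuclideanSpace ℝ (Fin n) → (Fin n → ℕ) → ℂ)
    (B : HilbertBasis (Fin n → ℕ) ℂ (L2Rn n))
    (hB : ∀ ν, (B ν : EuclideanSpace ℝ (Fin n) → ℂ) =ᵐ[volume]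
      fun x => (hermiteFunN n ν x : ℂ))
    (T : L2Rn n →L[ℂ] L2Rn n)
    (hT : ∀ ν, (T (B ν) : EuclideanSpace ℝ (Fin n) → ℂ) =ᵐ[volume]
      fun x => m x ν * (hermiteFunN n ν x : ℂ))
    (hm : Summable fun ν : Fin n → ℕ =>
      (∫ x, ‖m x ν‖ ^ 2 * hermiteFunN n ν x ^ 2) ^ ((1 : ℝ) / 2)) :
    MemSchatten 1 T ∧
      (∑' ν : Fin n → ℕ, (inner ℂ (B ν) (T (B ν)) : ℂ)) =
        ∑' ν : Fin n → ℕ, ∫ x, m x ν * (hermiteFunN n ν x : ℂ) ^ 2 := by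
  have hnorm : ∀ ν, ‖T (B ν)‖ = (∫ x, ‖m x ν‖ ^ 2 * hermiteFunN n ν x ^ 2) ^ ((1 : ℝ) / 2) := by
    intro ν
    rw [← Real.sqrt_eq_rpow, ← Real.sqrt_sq (norm_nonneg (T (B ν))),
      L2.norm_sq_eq_integral_norm_sq]
    congr 1
    refine integral_congr_ae ?_
    filter_upwards [hT ν] with x hx
    rw [hx, norm_mul, mul_pow, Complex.norm_real, Real.norm_eq_abs, sq_abs]
  refine ⟨?_, tsum_congr fun ν => ?_⟩
  · simpa only [MemSchatten, Real.rpow_one] using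
      summable_singularValue_of_summable_norm_apply B (T := T) (by simpa only [hnorm] using hm)
  · rw [L2.inner_def]
    refine integral_congr_ae ?_
    filter_upwards [hB ν, hT ν] with x hBx hTx
    rw [hBx, hTx, RCLike.inner_apply, Complex.conj_ofReal]
    ring
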